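/- arXiv:1904.05551 — 2 statements merged into one kernel-verified Lean document; each statement's English description precedes it below -/
import Mathlib

section
/- Let m ≥ 3 and F > 2m with m ∤ F, and let S be a numerical semigroup with multiplicity m and Frobenius number F. Then U = S ∪ {x ∈ ℕ \ S : F - x ∉ S and x > F/2} is the unique irreducible numerical semigroup with multiplicity m, Frobenius number F, and satisfying {s ∈ U : m < s < F/2} = {s ∈ S : m < s < F/2}. -/
/-- A numerical semigroup: a cofinite submonoid of (ℕ, +). -/
def IsNumericalSemigroup (S : Set ℕ) : Prop :=
  0 ∈ S ∧ (∀ a ∈ S, ∀ b ∈ S, a + b ∈ S) ∧ Sᶜ.Finite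

/-- `m` is the multiplicity of `S`: its least positive element. -/
def HasMultiplicity (S : Set ℕ) (m : ℕ) : Prop :=
  m ∈ S ∧ 0 < m ∧ ∀ s ∈ S, 0 < s → m ≤ s

/-- `F` is the Frobenius number of `S`: the largest non-element. -/
def HasFrobenius (S : Set ℕ) (F : ℕ) : Prop :=
  F ∉ S ∧ ∀ x : ℕ, F < x → x ∈ S

/-- `S` is an irreducible numerical semigroup: it is not the intersection of
two numerical semigroups properly containing it. -/
def IsIrreducibleNS (S : Set ℕ) : Prop :=
  IsNumericalSemigroup S ∧
    ¬ ∃ S₁ S₂ : Set ℕ, IsNumericalSemigroup S₁ ∧ IsNumericalSemigroup S₂ ∧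
      S ⊂ S₁ ∧ S ⊂ S₂ ∧ S = S₁ ∩ S₂

/-!
A numerical semigroup `T` with Frobenius number `F` is irreducible exactly when every gap
`x` with `2 * x ≠ F` has `F - x ∈ T`: if `F - x ∉ T` for some gap `x > F / 2`, the largest
such `x` can be adjoined to `T`, and then `T = (T ∪ {x}) ∩ (T ∪ {F})`. Consequently an
irreducible numerical semigroup with Frobenius number `F` is determined by its elements
below `F / 2`, since above `F / 2` it contains `x` iff it misses `F - x`. Adjoining to `S`
every `x > F / 2` with `F - x ∉ S` produces such a semigroup, agreeing with `S` below `F / 2`.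
-/

theorem IsNumericalSemigroup.add_mem {S : Set ℕ} (hS : IsNumericalSemigroup S) {a b : ℕ}
    (ha : a ∈ S) (hb : b ∈ S) : a + b ∈ S :=
  hS.2.1 a ha b hb

theorem IsNumericalSemigroup.sub_notMem {S : Set ℕ} {F x : ℕ} (hS : IsNumericalSemigroup S)
    (hFS : F ∉ S) (hx : x ∈ S) (hxF : x ≤ F) : F - x ∉ S := fun h =>
  hFS (by simpa [Nat.add_sub_cancel' hxF] using hS.add_mem hx h)

theorem HasFrobenius.le_of_notMem {S : Set ℕ} {F x : ℕ} (hF : HasFrobenius S F) (hx : x ∉ S) :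
    x ≤ F :=
  not_lt.1 fun h => hx (hF.2 x h)

theorem IsNumericalSemigroup.insert_of_add_mem {S : Set ℕ} {x : ℕ} (hS : IsNumericalSemigroup S)
    (hxx : x + x ∈ S) (hx : ∀ s ∈ S, s ≠ 0 → s + x ∈ S) : IsNumericalSemigroup (insert x S) := by
  have hsx : ∀ s ∈ S, s + x ∈ insert x S := fun s hs => by
    rcases eq_or_ne s 0 with rfl | hs0
    · simp
    · exact Set.mem_insert_of_mem x (hx s hs hs0)
  refine ⟨Set.mem_insert_of_mem x hS.1, ?_, hS.2.2.subset (Set.compl_subset_compl.2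
    (Set.subset_insert x S))⟩
  rintro a (rfl | ha) b (rfl | hb)
  · exact Set.mem_insert_of_mem _ hxx
  · rw [add_comm]; exact hsx b hb
  · exact hsx a ha
  · exact Set.mem_insert_of_mem _ (hS.add_mem ha hb)

theorem IsNumericalSemigroup.insert_frobenius {S : Set ℕ} {F : ℕ} (hS : IsNumericalSemigroup S)
    (hF : HasFrobenius S F) : IsNumericalSemigroup (insert F S) := by
  have hF0 : F ≠ 0 := fun h => hF.1 (h ▸ hS.1)
  exact hS.insert_of_add_mem (hF.2 _ (by omega)) fun s _ hs0 => hF.2 _ (by omega)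

theorem IsIrreducibleNS.not_isNumericalSemigroup_insert {T : Set ℕ} {F x : ℕ}
    (hT : IsIrreducibleNS T) (hF : HasFrobenius T F) (hx : x ∉ T) (hxF : x ≠ F) :
    ¬ IsNumericalSemigroup (insert x T) := fun hxT =>
  hT.2 ⟨insert x T, insert F T, hxT, hT.1.insert_frobenius hF, Set.ssubset_insert hx,
    Set.ssubset_insert hF.1, by ext y; simp only [Set.mem_inter_iff, Set.mem_insert_iff]; grind⟩

theorem IsIrreducibleNS.mem_of_sub_notMem {T : Set ℕ} {F : ℕ} (hT : IsIrreducibleNS T)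
    (hF : HasFrobenius T F) (x : ℕ) (h2x : F < 2 * x) (hFx : F - x ∉ T) : x ∈ T := by
  induction hd : F - x using Nat.strong_induction_on generalizing x with
  | _ d ih =>
  by_contra hx
  have hxF : x ≠ F := by rintro rfl; exact hFx (by simpa using hT.1.1)
  -- Every `s + x < F` (with `s ∈ T`) is closer to `F` and again has `F - (s + x) ∉ T`, so by
  -- induction it lies in `T`; hence `x` could be adjoined to `T`.
  refine hT.not_isNumericalSemigroup_insert hF hx hxF
    (hT.1.insert_of_add_mem (hF.2 _ (by omega)) ?_)
  intro s hs hs0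
  rcases lt_or_ge F (s + x) with hsxF | hsxF
  · exact hF.2 _ hsxF
  · have hsx : s + x ≠ F := by rintro rfl; exact hFx (by simpa using hs)
    refine ih (F - (s + x)) (by omega) (s + x) (by omega) (fun h => hFx ?_) rfl
    simpa [show F - (s + x) + s = F - x by omega] using hT.1.add_mem h hs

theorem IsIrreducibleNS.sub_mem {T : Set ℕ} {F x : ℕ} (hT : IsIrreducibleNS T)
    (hF : HasFrobenius T F) (hx : x ∉ T) (h2x : 2 * x ≠ F) : F - x ∈ T := by
  by_contra hFx
  rcases lt_or_gt_of_ne h2x with h | h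
  · have hxF := hF.le_of_notMem hx
    exact hFx (hT.mem_of_sub_notMem hF (F - x) (by omega) (by rwa [Nat.sub_sub_self hxF]))
  · exact hx (hT.mem_of_sub_notMem hF x h hFx)

theorem isIrreducibleNS_of_sub_mem {T : Set ℕ} {F : ℕ} (hT : IsNumericalSemigroup T)
    (hF : HasFrobenius T F) (h : ∀ x ∉ T, 2 * x ≠ F → F - x ∈ T) : IsIrreducibleNS T := by
  refine ⟨hT, ?_⟩
  rintro ⟨S₁, S₂, hS₁, hS₂, hT₁, hT₂, rfl⟩
  -- A numerical semigroup `V ⊇ T` missing `F` cannot contain a gap `y` of `T`: `F = y + (F - y)`.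
  have key : ∀ V, IsNumericalSemigroup V → S₁ ∩ S₂ ⊆ V → F ∉ V → V ⊆ S₁ ∩ S₂ := by
    intro V hV hTV hFV y hyV
    by_contra hy
    have h2y : 2 * y ≠ F := fun h2y => hFV (by simpa [← h2y, two_mul] using hV.add_mem hyV hyV)
    have hyF := hF.le_of_notMem hy
    exact hFV (by simpa [Nat.add_sub_cancel' hyF] using hV.add_mem hyV (hTV (h y hy h2y)))
  by_cases hF₁ : F ∈ S₁
  · have hF₂ : F ∉ S₂ := fun hF₂ => hF.1 ⟨hF₁, hF₂⟩
    exact hT₂.2 (key S₂ hS₂ hT₂.1 hF₂)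
  · exact hT₁.2 (key S₁ hS₁ hT₁.1 hF₁)

theorem IsNumericalSemigroup.notMem_of_two_mul_eq {T : Set ℕ} {F x : ℕ}
    (hT : IsNumericalSemigroup T) (hFT : F ∉ T) (h2x : 2 * x = F) : x ∉ T := fun hx =>
  hT.sub_notMem hFT hx (by omega) (by rwa [show F - x = x by omega])

theorem IsIrreducibleNS.mem_iff_sub_notMem {T : Set ℕ} {F x : ℕ} (hT : IsIrreducibleNS T)
    (hF : HasFrobenius T F) (h2x : 2 * x ≠ F) (hxF : x ≤ F) : x ∈ T ↔ F - x ∉ T :=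
  ⟨fun hx => hT.1.sub_notMem hF.1 hx hxF,
    fun hFx => by_contra fun hx => hFx (hT.sub_mem hF hx h2x)⟩

theorem IsIrreducibleNS.ext_of_lowerHalf {T₁ T₂ : Set ℕ} {F : ℕ} (h₁ : IsIrreducibleNS T₁)
    (h₂ : IsIrreducibleNS T₂) (hF₁ : HasFrobenius T₁ F) (hF₂ : HasFrobenius T₂ F)
    (h : ∀ x, 2 * x < F → (x ∈ T₁ ↔ x ∈ T₂)) : T₁ = T₂ := by
  ext x
  rcases lt_trichotomy (2 * x) F with hx | hx | hx
  · exact h x hx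
  · exact iff_of_false (h₁.1.notMem_of_two_mul_eq hF₁.1 hx) (h₂.1.notMem_of_two_mul_eq hF₂.1 hx)
  · rcases lt_or_ge F x with hxF | hxF
    · exact iff_of_true (hF₁.2 x hxF) (hF₂.2 x hxF)
    · rw [h₁.mem_iff_sub_notMem hF₁ hx.ne' hxF, h₂.mem_iff_sub_notMem hF₂ hx.ne' hxF,
        h (F - x) (by omega)]

theorem mem_iff_of_hasMultiplicity {A B : Set ℕ} {m x : ℕ} (hA : HasMultiplicity A m)
    (hB : HasMultiplicity B m) (hA0 : 0 ∈ A) (hB0 : 0 ∈ B) (hxm : x ≤ m) : x ∈ A ↔ x ∈ B := by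
  rcases eq_or_ne x 0 with rfl | hx0
  · exact iff_of_true hA0 hB0
  rcases eq_or_lt_of_le hxm with rfl | hxm
  · exact iff_of_true hA.1 hB.1
  · exact iff_of_false (fun hx => by have := hA.2.2 x hx (by omega); omega)
      (fun hx => by have := hB.2.2 x hx (by omega); omega)

def irreducibleCompletion (S : Set ℕ) (F : ℕ) : Set ℕ :=
  S ∪ {x : ℕ | x ∉ S ∧ F - x ∉ S ∧ 2 * x > F}

section irreducibleCompletion

variable {S : Set ℕ} {F x : ℕ}

theorem mem_irreducibleCompletion :
    x ∈ irreducibleCompletion S F ↔ x ∈ S ∨ F - x ∉ S ∧ F < 2 * x := by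
  simp only [irreducibleCompletion, Set.mem_union, Set.mem_ofPred_eq]
  tauto

theorem mem_irreducibleCompletion_of_mem (hx : x ∈ S) : x ∈ irreducibleCompletion S F :=
  Set.mem_union_left _ hx

theorem mem_irreducibleCompletion_iff_of_two_mul_le (hx : 2 * x ≤ F) :
    x ∈ irreducibleCompletion S F ↔ x ∈ S := by
  rw [mem_irreducibleCompletion]
  exact or_iff_left fun h => absurd h.2 (by omega)

theorem add_mem_irreducibleCompletion {a b : ℕ} (hS : IsNumericalSemigroup S)
    (hF : HasFrobenius S F) (ha : a ∈ S) (hb : F - b ∉ S) (h2b : F < 2 * b) :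
    a + b ∈ irreducibleCompletion S F := by
  by_cases hab : a + b ∈ S
  · exact mem_irreducibleCompletion_of_mem hab
  have habF := hF.le_of_notMem hab
  refine mem_irreducibleCompletion.2 (Or.inr ⟨fun h => hb ?_, by omega⟩)
  simpa [show F - (a + b) + a = F - b by omega] using hS.add_mem h ha

theorem isNumericalSemigroup_irreducibleCompletion (hS : IsNumericalSemigroup S)
    (hF : HasFrobenius S F) :
    IsNumericalSemigroup (irreducibleCompletion S F) := by
  refine ⟨mem_irreducibleCompletion_of_mem hS.1, ?_,
    hS.2.2.subset (Set.compl_subset_compl.2 Set.subset_union_left)⟩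
  intro a ha b hb
  rcases mem_irreducibleCompletion.1 ha with ha | ⟨ha, h2a⟩ <;>
    rcases mem_irreducibleCompletion.1 hb with hb | ⟨hb, h2b⟩
  · exact mem_irreducibleCompletion_of_mem (hS.add_mem ha hb)
  · exact add_mem_irreducibleCompletion hS hF ha hb h2b
  · rw [add_comm]; exact add_mem_irreducibleCompletion hS hF hb ha h2a
  · exact mem_irreducibleCompletion_of_mem (hF.2 _ (by omega))

theorem hasFrobenius_irreducibleCompletion (hS : IsNumericalSemigroup S)
    (hF : HasFrobenius S F) : HasFrobenius (irreducibleCompletion S F) F := by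
  refine ⟨fun h => ?_, fun x hx => mem_irreducibleCompletion_of_mem (hF.2 x hx)⟩
  rcases mem_irreducibleCompletion.1 h with h | ⟨h, _⟩
  · exact hF.1 h
  · exact h (by simpa using hS.1)

theorem isIrreducibleNS_irreducibleCompletion (hS : IsNumericalSemigroup S)
    (hF : HasFrobenius S F) : IsIrreducibleNS (irreducibleCompletion S F) := by
  refine isIrreducibleNS_of_sub_mem (isNumericalSemigroup_irreducibleCompletion hS hF)
    (hasFrobenius_irreducibleCompletion hS hF) fun x hx h2x => ?_
  have hxF := (hasFrobenius_irreducibleCompletion hS hF).le_of_notMem hx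
  rw [mem_irreducibleCompletion, not_or, not_and] at hx
  by_cases hFx : F - x ∈ S
  · exact mem_irreducibleCompletion_of_mem hFx
  · have := hx.2 hFx
    exact mem_irreducibleCompletion.2 (Or.inr ⟨by rw [Nat.sub_sub_self hxF]; exact hx.1, by omega⟩)

theorem hasMultiplicity_irreducibleCompletion {m : ℕ} (hm : HasMultiplicity S m)
    (hmF : 2 * m ≤ F) : HasMultiplicity (irreducibleCompletion S F) m := by
  refine ⟨mem_irreducibleCompletion_of_mem hm.1, hm.2.1, fun s hs hs0 => ?_⟩
  rcases mem_irreducibleCompletion.1 hs with hs | ⟨_, h2s⟩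
  · exact hm.2.2 s hs hs0
  · omega

end irreducibleCompletion

theorem stmt11_general (m F : ℕ) (hF : 2 * m < F)
    (S : Set ℕ) (hS : IsNumericalSemigroup S) (hmS : HasMultiplicity S m)
    (hFS : HasFrobenius S F) :
    ∀ U : Set ℕ, U = S ∪ {x : ℕ | x ∉ S ∧ F - x ∉ S ∧ 2 * x > F} →
      (IsIrreducibleNS U ∧ HasMultiplicity U m ∧ HasFrobenius U F ∧
        {s ∈ U | m < s ∧ 2 * s < F} = {s ∈ S | m < s ∧ 2 * s < F}) ∧
      ∀ T : Set ℕ, IsIrreducibleNS T → HasMultiplicity T m → HasFrobenius T F →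
        {s ∈ T | m < s ∧ 2 * s < F} = {s ∈ S | m < s ∧ 2 * s < F} → T = U := by
  intro U hU
  obtain rfl : U = irreducibleCompletion S F := hU
  have hUirr := isIrreducibleNS_irreducibleCompletion hS hFS
  have hUF := hasFrobenius_irreducibleCompletion hS hFS
  have hUm := hasMultiplicity_irreducibleCompletion hmS hF.le
  refine ⟨⟨hUirr, hUm, hUF, ?_⟩, fun T hT hTm hTF hTS => ?_⟩
  · ext s
    simp only [Set.mem_ofPred_eq]
    exact and_congr_left fun hs => mem_irreducibleCompletion_iff_of_two_mul_le hs.2.le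
  refine hT.ext_of_lowerHalf hUirr hTF hUF fun x hx => ?_
  rw [mem_irreducibleCompletion_iff_of_two_mul_le hx.le]
  rcases le_or_gt x m with hxm | hmx
  · exact mem_iff_of_hasMultiplicity hTm hmS hT.1.1 hS.1 hxm
  · simpa [hmx, hx] using Set.ext_iff.1 hTS x

theorem stmt11 (m F : ℕ) (hm : 3 ≤ m) (hF : 2 * m < F) (hdvd : ¬ m ∣ F)
    (S : Set ℕ) (hS : IsNumericalSemigroup S) (hmS : HasMultiplicity S m)
    (hFS : HasFrobenius S F) :
    ∀ U : Set ℕ, U = S ∪ {x : ℕ | x ∉ S ∧ F - x ∉ S ∧ 2 * x > F} →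
      (IsIrreducibleNS U ∧ HasMultiplicity U m ∧ HasFrobenius U F ∧
        {s ∈ U | m < s ∧ 2 * s < F} = {s ∈ S | m < s ∧ 2 * s < F}) ∧
      ∀ T : Set ℕ, IsIrreducibleNS T → HasMultiplicity T m → HasFrobenius T F →
        {s ∈ T | m < s ∧ 2 * s < F} = {s ∈ S | m < s ∧ 2 * s < F} → T = U :=
  stmt11_general m F hF S hS hmS hFS
end

section
/- Let m, g, F be positive integers with 2 ≤ m ≤ g and m ∤ F. There exists a numerical semigroup with multiplicity m, genus g, and Frobenius number F if and only if ⌈mg/(m-1)⌉ - 1 ≤ F ≤ 2g - 1. -/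
/-!
Let `n` be the number of elements of `S` below `F`, so that `g + n = F + 1`. The map
`s ↦ F - s` sends these elements injectively to gaps, so `n ≤ g`, i.e. `F + 1 ≤ 2g`; and they
include `0, m, …, ⌊F/m⌋ m`, so `g ≤ F - ⌊F/m⌋`, which for `m ∤ F` is the bound
`mg ≤ (m - 1)(F + 1)`.

Conversely, for `F < 2m` the semigroup `{0} ∪ [m, m + F - g) ∪ (F, ∞)` works. For `F > 2m`,
start from the multiples of `m` below `F` together with `(F, ∞)`, of genus `F - ⌊F/m⌋`, and
lower the genus one step at a time: while `g > ⌊F/2⌋ + 1` there is a gap `x > F/2` such that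
`F - x` is a gap too, and adjoining the largest such `x` keeps a numerical semigroup with the
same multiplicity and Frobenius number.
-/

open Set

namespace HasFrobenius

variable {S : Set ℕ} {F : ℕ}

lemma le_of_notMem_s19 (hF : HasFrobenius S F) {x : ℕ} (hx : x ∉ S) : x ≤ F :=
  not_lt.mp fun h => hx (hF.2 x h)

lemma compl_subset_Iic (hF : HasFrobenius S F) : Sᶜ ⊆ Iic F :=
  fun _ hx => hF.le_of_notMem_s19 hx

lemma ncard_compl_add_ncard_inter_Iio (hF : HasFrobenius S F) :
    Sᶜ.ncard + (S ∩ Iio F).ncard = F + 1 := by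
  have hunion : Sᶜ ∪ (S ∩ Iio F) = Iic F := by
    ext x
    by_cases hxS : x ∈ S
    · have hxF : x ≠ F := fun h => hF.1 (h ▸ hxS)
      simp [hxS, hxF.le_iff_lt]
    · simp [hxS, hF.le_of_notMem_s19 hxS]
  rw [← ncard_union_eq (disjoint_compl_left.mono_right inter_subset_left)
    ((finite_Iic F).subset hF.compl_subset_Iic), hunion, ncard_Iic_nat]

lemma insert (hF : HasFrobenius S F) {x : ℕ} (hx : x ≠ F) : HasFrobenius (insert x S) F :=
  ⟨by simpa [Ne.symm hx] using hF.1, fun y hy => mem_insert_of_mem x (hF.2 y hy)⟩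

/-- Otherwise `y ↦ min y (F - y)` would map the gaps injectively into `[0, F/2]`. -/
lemma exists_gap_pair (hF : HasFrobenius S F) (hg : F / 2 + 1 < Sᶜ.ncard) :
    ∃ y, F < 2 * y ∧ y ∉ S ∧ F - y ∉ S := by
  by_contra! hno
  have hmaps : MapsTo (fun y => min y (F - y)) Sᶜ (Iic (F / 2)) := fun y _ =>
    show min y (F - y) ≤ F / 2 by omega
  have hinj : InjOn (fun y => min y (F - y)) Sᶜ := by
    intro a ha b hb hab
    have haF := hF.le_of_notMem_s19 ha
    have hbF := hF.le_of_notMem_s19 hb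
    simp only at hab
    by_contra hne
    rcases (by omega : F < 2 * a ∧ b = F - a ∨ F < 2 * b ∧ a = F - b) with ⟨h2, rfl⟩ | ⟨h2, rfl⟩
    exacts [hb (hno a h2 ha), ha (hno b h2 hb)]
  have := ncard_le_ncard_of_injOn _ hmaps hinj (finite_Iic _)
  rw [ncard_Iic_nat] at this
  omega

end HasFrobenius

lemma HasMultiplicity.insert {S : Set ℕ} {m x : ℕ} (hmul : HasMultiplicity S m) (hx : m ≤ x) :
    HasMultiplicity (insert x S) m := by
  refine ⟨mem_insert_of_mem x hmul.1, hmul.2.1, ?_⟩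
  rintro s (rfl | hs) hpos
  exacts [hx, hmul.2.2 s hs hpos]

lemma ncard_image_mul_right_Iio {m : ℕ} (hm : 0 < m) (n : ℕ) :
    ((· * m) '' Iio n).ncard = n := by
  rw [ncard_image_of_injective _ (mul_left_injective₀ hm.ne'), ncard_Iio_nat]

namespace IsNumericalSemigroup

variable {S : Set ℕ} {F : ℕ}

lemma mul_mem (hS : IsNumericalSemigroup S) {m : ℕ} (hm : m ∈ S) (k : ℕ) : k * m ∈ S := by
  induction k with
  | zero => simpa using hS.1
  | succ k ih => simpa [add_mul] using hS.2.1 _ ih _ hm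

lemma insert (hS : IsNumericalSemigroup S) {x : ℕ} (h2x : x + x ∈ S)
    (hxS : ∀ s ∈ S, 0 < s → x + s ∈ S) : IsNumericalSemigroup (insert x S) := by
  have hadd : ∀ s ∈ S, x + s = x ∨ x + s ∈ S := fun s hs => by
    rcases Nat.eq_zero_or_pos s with rfl | hpos
    exacts [Or.inl rfl, Or.inr (hxS s hs hpos)]
  refine ⟨mem_insert_of_mem x hS.1, ?_, hS.2.2.subset fun y hy h => hy (mem_insert_of_mem x h)⟩
  rintro a (rfl | ha) b (rfl | hb)
  · exact mem_insert_of_mem _ h2x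
  · exact hadd b hb
  · exact add_comm a _ ▸ hadd a ha
  · exact mem_insert_of_mem x (hS.2.1 a ha b hb)

lemma ncard_inter_Iio_le_ncard_compl (hS : IsNumericalSemigroup S) (hF : HasFrobenius S F) :
    (S ∩ Iio F).ncard ≤ Sᶜ.ncard := by
  refine ncard_le_ncard_of_injOn (F - ·) ?_ ?_ hS.2.2
  · rintro s ⟨hs, hsF⟩ hFs
    exact hF.1 (by simpa [Nat.sub_add_cancel hsF.le] using hS.2.1 _ hFs _ hs)
  · rintro a ⟨-, ha⟩ b ⟨-, hb⟩ hab
    simp only [mem_Iio] at ha hb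
    simp only at hab
    omega

lemma div_add_one_le_ncard_inter_Iio (hS : IsNumericalSemigroup S) (hF : HasFrobenius S F)
    {m : ℕ} (hmul : HasMultiplicity S m) : F / m + 1 ≤ (S ∩ Iio F).ncard := by
  rw [← ncard_image_mul_right_Iio hmul.2.1 (F / m + 1)]
  refine ncard_le_ncard ?_ ((finite_Iio F).subset inter_subset_right)
  rintro _ ⟨k, hk, rfl⟩
  have hkm : k * m ≤ F := (Nat.le_div_iff_mul_le hmul.2.1).mp (Nat.lt_succ_iff.mp hk)
  exact ⟨hS.mul_mem hmul.1 k, lt_of_le_of_ne hkm fun h => hF.1 (h ▸ hS.mul_mem hmul.1 k)⟩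

/-- Take `x` largest among the gap pairs given by `HasFrobenius.exists_gap_pair`. -/
lemma exists_gap_add_mem (hS : IsNumericalSemigroup S) (hF : HasFrobenius S F)
    (hg : F / 2 + 1 < Sᶜ.ncard) :
    ∃ x, F < 2 * x ∧ x ∉ S ∧ F - x ∉ S ∧ ∀ s ∈ S, 0 < s → x + s ∈ S := by
  obtain ⟨x, ⟨h2x, hx, hFx⟩, hmax⟩ := BddAbove.exists_isGreatest_of_nonempty
    (⟨F, fun y hy => hF.le_of_notMem_s19 hy.2.1⟩ : BddAbove {y | F < 2 * y ∧ y ∉ S ∧ F - y ∉ S})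
    (hF.exists_gap_pair hg)
  refine ⟨x, h2x, hx, hFx, fun s hs hpos => ?_⟩
  by_contra hxs
  have hxsF : x + s ≤ F := hF.le_of_notMem_s19 hxs
  have hFxs : F - (x + s) ∉ S := fun h =>
    hFx (by simpa [show F - (x + s) + s = F - x by omega] using hS.2.1 _ h _ hs)
  have := hmax ⟨by omega, hxs, hFxs⟩
  omega

end IsNumericalSemigroup

def Realizable (m g F : ℕ) : Prop :=
  ∃ S : Set ℕ, IsNumericalSemigroup S ∧ HasMultiplicity S m ∧ Sᶜ.ncard = g ∧ HasFrobenius S F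

lemma realizable_of_lt_two_mul {m g F : ℕ} (hg : m ≤ g) (hgF : g < F) (hF2m : F < 2 * m) :
    Realizable m g F := by
  set S : Set ℕ := {x | x = 0 ∨ m ≤ x ∧ x < m + (F - g) ∨ F < x}
  have hF : HasFrobenius S F := by
    refine ⟨fun h => ?_, fun x hx => Or.inr (Or.inr hx)⟩
    simp only [S, mem_ofPred_eq] at h
    omega
  have hsmall : S ∩ Iio F = insert 0 (Ico m (m + (F - g))) := by
    ext x
    simp only [S, mem_inter_iff, mem_ofPred_eq, mem_Iio, mem_insert_iff, mem_Ico]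
    omega
  refine ⟨S, ⟨Or.inl rfl, ?_, (finite_Iic F).subset hF.compl_subset_Iic⟩,
    ⟨Or.inr (Or.inl ⟨le_rfl, by omega⟩), by omega, ?_⟩, ?_, hF⟩
  · rintro a ha b hb
    simp only [S, mem_ofPred_eq] at ha hb ⊢
    omega
  · intro s hs hpos
    simp only [S, mem_ofPred_eq] at hs
    omega
  · have := hF.ncard_compl_add_ncard_inter_Iio
    rw [hsmall, ncard_insert_of_notMem fun h => by rw [mem_Ico] at h; omega, ncard_Ico_nat] at this
    omega

lemma realizable_sub_div {m F : ℕ} (hm : 0 < m) (hmF : m < F) (hdvd : ¬ m ∣ F) :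
    Realizable m (F - F / m) F := by
  set S : Set ℕ := {x | m ∣ x ∧ x < F ∨ F < x}
  have hF : HasFrobenius S F := ⟨by simp [S, hdvd], fun x hx => Or.inr hx⟩
  have hsmall : S ∩ Iio F = (· * m) '' Iio (F / m + 1) := by
    ext x
    simp only [S, mem_inter_iff, mem_ofPred_eq, mem_Iio, mem_image, Nat.lt_succ_iff,
      Nat.le_div_iff_mul_le hm]
    constructor
    · rintro ⟨⟨⟨k, rfl⟩, hx⟩ | hx, hxF⟩
      exacts [⟨k, by rw [mul_comm]; exact hx.le, mul_comm _ _⟩, absurd hx (by omega)]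
    · rintro ⟨k, hk, rfl⟩
      have hkF : k * m < F := lt_of_le_of_ne hk fun h => hdvd (h ▸ dvd_mul_left m k)
      exact ⟨Or.inl ⟨dvd_mul_left m k, hkF⟩, hkF⟩
  refine ⟨S, ⟨Or.inl ⟨dvd_zero m, by omega⟩, ?_, (finite_Iic F).subset hF.compl_subset_Iic⟩,
    ⟨Or.inl ⟨dvd_rfl, hmF⟩, hm, ?_⟩, ?_, hF⟩
  · rintro a (⟨hda, ha⟩ | ha) b (⟨hdb, hb⟩ | hb)
    · rcases lt_trichotomy (a + b) F with h | h | h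
      exacts [Or.inl ⟨dvd_add hda hdb, h⟩, absurd (h ▸ dvd_add hda hdb) hdvd, Or.inr h]
    all_goals exact Or.inr (by omega)
  · rintro s (⟨hds, -⟩ | hs) hpos
    exacts [Nat.le_of_dvd hpos hds, by omega]
  · have := hF.ncard_compl_add_ncard_inter_Iio
    rw [hsmall, ncard_image_mul_right_Iio hm] at this
    omega

namespace Realizable

variable {m g F : ℕ}

lemma of_succ (hmF : 2 * m ≤ F) (hg : F / 2 + 1 ≤ g) (h : Realizable m (g + 1) F) :
    Realizable m g F := by
  obtain ⟨S, hS, hmul, hgen, hF⟩ := h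
  obtain ⟨x, h2x, hx, hFx, hxS⟩ := hS.exists_gap_add_mem hF (by omega)
  have hxF : x ≠ F := by
    rintro rfl
    exact hFx (by simpa using hS.1)
  refine ⟨insert x S, hS.insert (hF.2 _ (by omega)) hxS, hmul.insert (by omega), ?_,
    hF.insert hxF⟩
  rw [show (insert x S)ᶜ = Sᶜ \ {x} by ext; simp [not_or, and_comm],
    ncard_sdiff_singleton_of_mem hx, hgen, Nat.add_sub_cancel]

lemma of_le {g' : ℕ} (hmF : 2 * m ≤ F) (hg : F / 2 + 1 ≤ g) (hgg' : g ≤ g')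
    (h : Realizable m g' F) : Realizable m g F := by
  obtain ⟨d, rfl⟩ := Nat.exists_eq_add_of_le hgg'
  induction d generalizing g with
  | zero => exact h
  | succ d ih =>
    rw [← add_assoc, add_right_comm] at h
    exact of_succ hmF hg (ih (by omega) (by omega) h)

end Realizable

lemma realizable_of_bounds {m g F : ℕ} (hm : 0 < m) (hg : m ≤ g) (hdvd : ¬ m ∣ F)
    (hlow : F + 1 ≤ 2 * g) (hhigh : g ≤ F - F / m) : Realizable m g F := by
  have hmF : m < F := by
    by_contra! hFm
    rcases hFm.lt_or_eq with hFm | rfl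
    · rw [Nat.div_eq_of_lt hFm] at hhigh
      omega
    · exact hdvd dvd_rfl
  rcases lt_or_ge F (2 * m) with hF2m | hF2m
  · have : F / m = 1 := Nat.div_eq_of_lt_le (by omega) (by omega)
    exact realizable_of_lt_two_mul hg (by omega) hF2m
  · exact (realizable_sub_div hm hmF hdvd).of_le hF2m (by omega) hhigh

lemma le_sub_div_iff_mul_le {m g F : ℕ} (hm : 0 < m) (hdvd : ¬ m ∣ F) :
    g ≤ F - F / m ↔ m * g ≤ (m - 1) * (F + 1) := by
  obtain ⟨k, rfl⟩ : ∃ k, m = k + 1 := ⟨m - 1, by omega⟩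
  have hr : 0 < F % (k + 1) := Nat.pos_of_ne_zero fun h => hdvd (Nat.dvd_of_mod_eq_zero h)
  have hrk := Nat.mod_lt F hm
  have hF := Nat.div_add_mod F (k + 1)
  generalize F / (k + 1) = q at *
  generalize F % (k + 1) = r at *
  subst hF
  rw [Nat.add_sub_cancel, show (k + 1) * q + r - q = k * q + r by rw [add_mul, one_mul]; omega]
  constructor <;> intro h <;> nlinarith

lemma ceil_mul_div_sub_one_sub_one_le_iff {m g F : ℕ} (hm : 1 < m) :
    ⌈(m * g : ℚ) / ((m : ℚ) - 1)⌉ - 1 ≤ (F : ℤ) ↔ m * g ≤ (m - 1) * (F + 1) := by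
  have hden : (0 : ℚ) < m - 1 := by
    rw [sub_pos]
    exact_mod_cast hm
  rw [sub_le_iff_le_add, Int.ceil_le, div_le_iff₀ hden, ← Nat.cast_le (α := ℚ)]
  push_cast [Nat.cast_sub hm.le]
  ring_nf

theorem stmt19_general (m g F : ℕ) (hm : 2 ≤ m) (hg : m ≤ g)
    (hdvd : ¬ m ∣ F) :
    (∃ S : Set ℕ, IsNumericalSemigroup S ∧ HasMultiplicity S m ∧
        Sᶜ.ncard = g ∧ HasFrobenius S F) ↔
      (⌈(m * g : ℚ) / ((m : ℚ) - 1)⌉ - 1 ≤ (F : ℤ) ∧ F ≤ 2 * g - 1) := by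
  rw [ceil_mul_div_sub_one_sub_one_le_iff hm, ← le_sub_div_iff_mul_le (by omega) hdvd]
  constructor
  · rintro ⟨S, hS, hmul, rfl, hF⟩
    have hcount := hF.ncard_compl_add_ncard_inter_Iio
    have hlow := hS.ncard_inter_Iio_le_ncard_compl hF
    have hmultiples := hS.div_add_one_le_ncard_inter_Iio hF hmul
    omega
  · rintro ⟨hhigh, hlow⟩
    exact realizable_of_bounds (by omega) hg hdvd (by omega) hhigh

theorem stmt19 (m g F : ℕ) (hm : 2 ≤ m) (hg : m ≤ g) (hF : 0 < F)
    (hdvd : ¬ m ∣ F) :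
    (∃ S : Set ℕ, IsNumericalSemigroup S ∧ HasMultiplicity S m ∧
        Sᶜ.ncard = g ∧ HasFrobenius S F) ↔
      (⌈(m * g : ℚ) / ((m : ℚ) - 1)⌉ - 1 ≤ (F : ℤ) ∧ F ≤ 2 * g - 1) :=
  stmt19_general m g F hm hg hdvd
end
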